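/- Let A = {0,1} and let F be the set of 2-blocks u with u(0) ≠ u(1) or u(ε) = u(0) = u(1) = 1, so that the allowed 2-blocks of X_F are exactly (0,0,0), (0,1,1), (1,0,0) (the simplified golden-mean tree-shift). Then X_F is uniformly strongly irreducible with complete prefix code Σ^2: any two patterns accepted by X_F are connected through Σ^2. -/

import Mathlib

/-- Words over the binary alphabet Σ = {0,1}, encoded as lists of booleans
(0 ↦ `false`, 1 ↦ `true`).  Concatenation of words is list append. -/
abbrev Word : Type := List Bool

/-- An infinite tree over the alphabet `A`: a labeling of Σ* by `A`. -/
abbrev ITree (A : Type) : Type := Word → A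

/-- The shift map σ_w, given by (σ_w t)(x) = t(wx). -/
def shiftW {A : Type} (w : Word) (t : ITree A) : ITree A := fun x => t (w ++ x)

/-- A pattern: a support (set of nodes) together with labels.  Only the values
of `val` on `supp` are relevant. -/
structure Pattern (A : Type) where
  supp : Set Word
  val : Word → A

/-- The support of a pattern is prefix-closed. -/
def Pattern.PrefixClosed {A : Type} (u : Pattern A) : Prop :=
  ∀ x ∈ u.supp, ∀ y : Word, y <+: x → y ∈ u.supp

/-- A leaf of a pattern: a node of the support none of whose children lies in
the support. -/
def Pattern.IsLeaf {A : Type} (u : Pattern A) (w : Word) : Prop :=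
  w ∈ u.supp ∧ ∀ i : Bool, w ++ [i] ∉ u.supp

/-- The pattern `u` is accepted by the tree `t` (rooted at some node `x`). -/
def AcceptedBy {A : Type} (u : Pattern A) (t : ITree A) : Prop :=
  ∃ x : Word, ∀ y ∈ u.supp, u.val y = t (x ++ y)

/-- The pattern `u` is accepted by some tree of `X`. -/
def AcceptedIn {A : Type} (X : Set (ITree A)) (u : Pattern A) : Prop :=
  ∃ t ∈ X, AcceptedBy u t

/-- The set of trees avoiding every pattern of the forbidden set `F`. -/
def treeShiftOf {A : Type} (F : Set (Pattern A)) : Set (ITree A) :=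
  { t | ∀ u ∈ F, ¬ AcceptedBy u t }

/-- A tree-shift: a set of trees of the form `X_F` for a set `F` of finite
(prefix-closed) patterns. -/
def IsTreeShift {A : Type} (X : Set (ITree A)) : Prop :=
  ∃ F : Set (Pattern A), (∀ u ∈ F, u.supp.Finite ∧ u.PrefixClosed) ∧ X = treeShiftOf F

/-- A complete prefix code: a finite set of nonempty words, none a prefix of
another, such that every word of length ≥ max{|p| : p ∈ P} has a prefix in P. -/
def IsCPC (P : Finset Word) : Prop :=
  ([] : Word) ∉ P ∧
  (∀ p ∈ P, ∀ q ∈ P, p <+: q → p = q) ∧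
  (∀ x : Word, P.sup List.length ≤ x.length → ∃ p ∈ P, p <+: x)

/-- Σ^k, the set of all words of length k, as a finite set. -/
def fullCode (k : ℕ) : Finset Word :=
  Finset.image (fun f : Fin k → Bool => List.ofFn f) Finset.univ

/-- Σ_{n-1}: the set of all words of length < n (i.e. length ≤ n-1). -/
def sigmaLt (n : ℕ) : Set Word := { x : Word | x.length < n }

/-- An n-block of `X`: a pattern with support Σ_{n-1} accepted by some tree of `X`. -/
def IsNBlock {A : Type} (X : Set (ITree A)) (n : ℕ) (u : Pattern A) : Prop :=
  u.supp = sigmaLt n ∧ AcceptedIn X u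

/-- A (finite, prefix-closed) pattern accepted by some tree of `X`. -/
def GoodPattern {A : Type} (X : Set (ITree A)) (u : Pattern A) : Prop :=
  u.supp.Finite ∧ u.PrefixClosed ∧ AcceptedIn X u

/-- Patterns `u`, `v` are connected through `P` in `X`: there is `t ∈ X`
agreeing with `u` on its support and with a copy of `v` rooted at `wx` for
every leaf `w` of `u` and every `x ∈ P`. -/
def ConnectedThrough {A : Type} (X : Set (ITree A)) (P : Finset Word) (u v : Pattern A) : Prop :=
  ∃ t ∈ X, (∀ y ∈ u.supp, t y = u.val y) ∧
    ∀ w : Word, u.IsLeaf w → ∀ x ∈ P, ∀ y ∈ v.supp, t (w ++ x ++ y) = v.val y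

/-- Block gluing: a single CPC connects any two n-blocks, for every n. -/
def BlockGluing {A : Type} (X : Set (ITree A)) : Prop :=
  ∃ P : Finset Word, IsCPC P ∧ ∀ n : ℕ, ∀ u v : Pattern A,
    IsNBlock X n u → IsNBlock X n v → ConnectedThrough X P u v

/-- Uniformly block gluing: the CPC can be taken of the form Σ^k. -/
def UniformlyBlockGluing {A : Type} (X : Set (ITree A)) : Prop :=
  ∃ k : ℕ, IsCPC (fullCode k) ∧ ∀ n : ℕ, ∀ u v : Pattern A,
    IsNBlock X n u → IsNBlock X n v → ConnectedThrough X (fullCode k) u v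

/-- Strongly irreducible: a single CPC connects any two accepted patterns. -/
def StronglyIrreducible {A : Type} (X : Set (ITree A)) : Prop :=
  ∃ P : Finset Word, IsCPC P ∧ ∀ u v : Pattern A,
    GoodPattern X u → GoodPattern X v → ConnectedThrough X P u v

/-- Uniformly strongly irreducible: the CPC can be taken of the form Σ^k. -/
def UniformlyStronglyIrreducible {A : Type} (X : Set (ITree A)) : Prop :=
  ∃ k : ℕ, IsCPC (fullCode k) ∧ ∀ u v : Pattern A,
    GoodPattern X u → GoodPattern X v → ConnectedThrough X (fullCode k) u v

/-- A leaf of a set of nodes. -/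
def SetLeaf (L : Set Word) (w : Word) : Prop := w ∈ L ∧ ∀ i : Bool, w ++ [i] ∉ L

/-- Topological mixing. -/
def TopologicallyMixing {A : Type} (X : Set (ITree A)) : Prop :=
  ∀ L1 L2 : Set Word, L1.Finite → L2.Finite →
    (∀ x ∈ L1, ∀ y : Word, y <+: x → y ∈ L1) →
    (∀ x ∈ L2, ∀ y : Word, y <+: x → y ∈ L2) →
    ∃ P : Finset Word, IsCPC P ∧ ∀ t1 ∈ X, ∀ t2 ∈ X, ∃ t ∈ X,
      (∀ y ∈ L1, t y = t1 y) ∧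
      ∀ w : Word, SetLeaf L1 w → ∀ x ∈ P, ∀ y ∈ L2, t (w ++ x ++ y) = t2 y

/-- The vertex tree-shift of the pair of 0-1 matrices `A0`, `A1`. -/
def vertexShift {A : Type} (A0 A1 : A → A → Bool) : Set (ITree A) :=
  { t | ∀ x : Word,
      A0 (t x) (t (x ++ [false])) = true ∧ A1 (t x) (t (x ++ [true])) = true }

/-- The n-blocks of `X`, realized as labelings of Σ_{n-1}; used for counting
`|B_n(X)|`. -/
def blockFuns {A : Type} (X : Set (ITree A)) (n : ℕ) :
    Set ({ x : Word // x.length < n } → A) :=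
  { f | ∃ t ∈ X, ∃ r : Word, ∀ y : { x : Word // x.length < n }, f y = t (r ++ y.val) }

/-- The forbidden set of the simplified golden-mean tree-shift: 2-blocks u
(support Σ_1) with u(0) ≠ u(1) or u(ε) = u(0) = u(1) = 1. -/
def goldenF : Set (Pattern Bool) :=
  { u | u.supp = { x : Word | x.length ≤ 1 } ∧
        (u.val [false] ≠ u.val [true] ∨
          (u.val [] = true ∧ u.val [false] = true ∧ u.val [true] = true)) }

/-! The allowed 2-blocks of `X_F` are exactly the triples `(a, b, b)` with `¬ (a = 1 ∧ b = 1)`;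
in particular a `0` may sit below any symbol and any pair of equal symbols may sit below a `0`.
To connect `u` with `v` through `Σ²`, take a tree of `X_F` showing `u`, and below every leaf of
`u` graft the tree whose two depth-one nodes are `0` and whose four depth-two subtrees are copies
of a tree of `X_F` showing `v`. Every 2-block of the result is then an allowed one. -/

lemma mem_fullCode {k : ℕ} {x : Word} : x ∈ fullCode k ↔ x.length = k := by
  constructor
  · intro hx
    obtain ⟨f, -, rfl⟩ := Finset.mem_image.1 hx
    exact List.length_ofFn
  · rintro rfl
    exact Finset.mem_image.2 ⟨x.get, Finset.mem_univ _, List.ofFn_get x⟩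

lemma isCPC_fullCode {k : ℕ} (hk : 0 < k) : IsCPC (fullCode k) := by
  refine ⟨fun h => hk.ne (mem_fullCode.1 h), ?_, fun x hx => ?_⟩
  · intro p hp q hq hpq
    exact hpq.eq_of_length (by rw [mem_fullCode.1 hp, mem_fullCode.1 hq])
  · have hkx : k ≤ x.length := calc
      k = (List.replicate k false).length := List.length_replicate.symm
      _ ≤ (fullCode k).sup List.length :=
        Finset.le_sup (f := List.length) (mem_fullCode.2 List.length_replicate)
      _ ≤ x.length := hx
    exact ⟨x.take k, mem_fullCode.2 (List.length_take_of_le hkx), List.take_prefix k x⟩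

section TwoBlockShift

variable {A : Type}

def twoBlockShift (R : A → A → A → Prop) : Set (ITree A) :=
  { t | ∀ x : Word, R (t x) (t (x ++ [false])) (t (x ++ [true])) }

def forbiddenTwoBlocks (R : A → A → A → Prop) : Set (Pattern A) :=
  { u | u.supp = { x : Word | x.length ≤ 1 } ∧ ¬ R (u.val []) (u.val [false]) (u.val [true]) }

theorem treeShiftOf_forbiddenTwoBlocks (R : A → A → A → Prop) :
    treeShiftOf (forbiddenTwoBlocks R) = twoBlockShift R := by
  ext t
  constructor
  · intro ht x
    by_contra hR
    exact ht ⟨{ y : Word | y.length ≤ 1 }, fun y => t (x ++ y)⟩ ⟨rfl, by simpa using hR⟩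
      ⟨x, fun _ _ => rfl⟩
  · rintro ht u ⟨hsupp, hR⟩ ⟨x, hx⟩
    have hmem : ∀ y : Word, y.length ≤ 1 → y ∈ u.supp := fun y hy => hsupp ▸ hy
    rw [hx [] (hmem _ (by simp)), hx [false] (hmem _ rfl.le), hx [true] (hmem _ rfl.le),
      List.append_nil] at hR
    exact hR (ht x)

lemma shiftW_mem_twoBlockShift {R : A → A → A → Prop} {t : ITree A}
    (ht : t ∈ twoBlockShift R) (w : Word) : shiftW w t ∈ twoBlockShift R := fun x => by
  simpa [shiftW, List.append_assoc] using ht (w ++ x)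

end TwoBlockShift

namespace Pattern

variable {A : Type} {u : Pattern A}

def BelowLeaf (u : Pattern A) (z : Word) : Prop :=
  ∃ w, u.IsLeaf w ∧ ∃ x : Word, x ≠ [] ∧ z = w ++ x

lemma IsLeaf.eq_of_prefix (hpc : u.PrefixClosed) {w z : Word} (hw : u.IsLeaf w)
    (hz : z ∈ u.supp) (hwz : w <+: z) : z = w := by
  obtain ⟨_ | ⟨i, x⟩, rfl⟩ := hwz
  · exact List.append_nil w
  · exact absurd (hpc _ hz (w ++ [i]) ⟨x, by simp⟩) (hw.2 i)

lemma not_belowLeaf_of_mem (hpc : u.PrefixClosed) {z : Word} (hz : z ∈ u.supp) :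
    ¬ u.BelowLeaf z := by
  rintro ⟨w, hw, x, hx, rfl⟩
  simpa [hx] using hw.eq_of_prefix hpc hz (List.prefix_append w x)

lemma IsLeaf.eq_of_append_eq (hpc : u.PrefixClosed) {w w' x x' : Word} (hw : u.IsLeaf w)
    (hw' : u.IsLeaf w') (h : w ++ x = w' ++ x') : w = w' := by
  rcases List.prefix_or_prefix_of_prefix (List.prefix_append w x)
      (h ▸ List.prefix_append w' x') with hww' | hw'w
  · exact (hw.eq_of_prefix hpc hw'.1 hww').symm
  · exact hw'.eq_of_prefix hpc hw.1 hw'w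

end Pattern

section Graft

variable {A : Type} {u : Pattern A} {t s : ITree A}

open Classical in
noncomputable def graft (u : Pattern A) (t s : ITree A) : ITree A := fun z =>
  if h : u.BelowLeaf z then s (z.drop h.choose.length) else t z

lemma graft_of_not_belowLeaf {z : Word} (hz : ¬ u.BelowLeaf z) : graft u t s z = t z :=
  dif_neg hz

lemma graft_leaf_append (hpc : u.PrefixClosed) {w x : Word} (hw : u.IsLeaf w) (hx : x ≠ []) :
    graft u t s (w ++ x) = s x := by
  have h : u.BelowLeaf (w ++ x) := ⟨w, hw, x, hx, rfl⟩
  obtain ⟨hw', x', -, hx'⟩ := h.choose_spec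
  rw [graft, dif_pos h, hw'.eq_of_append_eq hpc hw hx'.symm, List.drop_left]

lemma graft_mem_twoBlockShift {R : A → A → A → Prop} (hpc : u.PrefixClosed)
    (ht : t ∈ twoBlockShift R) (hs : s ∈ twoBlockShift R)
    (hroot : ∀ a, R a (s [false]) (s [true])) : graft u t s ∈ twoBlockShift R := by
  intro z
  by_cases hz : u.BelowLeaf z
  · obtain ⟨w, hw, x, hx, rfl⟩ := hz
    simp only [List.append_assoc, graft_leaf_append hpc hw hx,
      graft_leaf_append hpc hw (List.append_ne_nil_of_right_ne_nil x (List.cons_ne_nil _ _))]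
    exact hs x
  by_cases hleaf : u.IsLeaf z
  · simp only [graft_leaf_append hpc hleaf (List.cons_ne_nil _ _), graft_of_not_belowLeaf hz]
    exact hroot (t z)
  -- a child `z ++ [i]` strictly below a leaf `w` forces `z` to be `w` or to lie below `w`
  have hchild : ∀ i : Bool, ¬ u.BelowLeaf (z ++ [i]) := by
    rintro i ⟨w, hw, x, hx, hzx⟩
    obtain ⟨y, j, rfl⟩ := (List.eq_nil_or_concat x).resolve_left hx
    rw [List.concat_eq_append, ← List.append_assoc] at hzx
    obtain rfl := (List.append_inj' hzx rfl).1
    rcases eq_or_ne y [] with rfl | hy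
    · exact hleaf (by simpa using hw)
    · exact hz ⟨w, hw, y, hy, rfl⟩
  simp only [graft_of_not_belowLeaf hz, graft_of_not_belowLeaf (hchild _)]
  exact ht z

lemma connectedThrough_graft {X : Set (ITree A)} {P : Finset Word} {v : Pattern A}
    (hpc : u.PrefixClosed) (hP : [] ∉ P) (hX : graft u t s ∈ X)
    (ht : ∀ y ∈ u.supp, t y = u.val y) (hs : ∀ x ∈ P, ∀ y ∈ v.supp, s (x ++ y) = v.val y) :
    ConnectedThrough X P u v := by
  refine ⟨graft u t s, hX, fun y hy => ?_, fun w hw x hx y hy => ?_⟩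
  · rw [graft_of_not_belowLeaf (Pattern.not_belowLeaf_of_mem hpc hy), ht y hy]
  · have hxy : x ++ y ≠ [] := List.append_ne_nil_of_left_ne_nil (ne_of_mem_of_not_mem hx hP) y
    rw [List.append_assoc, graft_leaf_append hpc hw hxy, hs x hx y hy]

end Graft

def GoldenRule (a b c : Bool) : Prop := b = c ∧ (a = true → b = false)

lemma goldenF_eq : goldenF = forbiddenTwoBlocks GoldenRule := by
  ext u
  simp only [goldenF, forbiddenTwoBlocks, GoldenRule, Set.mem_ofPred_eq]
  cases u.val [] <;> cases u.val [false] <;> cases u.val [true] <;> simp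

def padTree (t : ITree Bool) : ITree Bool := fun x => if x.length < 2 then false else t (x.drop 2)

lemma padTree_append {t : ITree Bool} {x : Word} (hx : x.length = 2) (y : Word) :
    padTree t (x ++ y) = t y := by
  rw [padTree, if_neg (by simp [hx]; omega), List.drop_left' hx]

lemma padTree_mem_twoBlockShift {t : ITree Bool} (ht : t ∈ twoBlockShift GoldenRule) :
    padTree t ∈ twoBlockShift GoldenRule := by
  rintro (_ | ⟨a, _ | ⟨b, x⟩⟩)
  · exact ⟨rfl, fun _ => rfl⟩
  · exact ⟨rfl, fun h => absurd h Bool.false_ne_true⟩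
  · simpa [padTree] using ht x

lemma goldenShift_connectedThrough_fullCode_two (u v : Pattern Bool)
    (hu : GoodPattern (treeShiftOf goldenF) u) (hv : GoodPattern (treeShiftOf goldenF) v) :
    ConnectedThrough (treeShiftOf goldenF) (fullCode 2) u v := by
  obtain ⟨-, hpc, t, ht, xu, hxu⟩ := hu
  obtain ⟨-, -, t', ht', xv, hxv⟩ := hv
  rw [goldenF_eq, treeShiftOf_forbiddenTwoBlocks] at ht ht' ⊢
  refine connectedThrough_graft (t := shiftW xu t) (s := padTree (shiftW xv t')) hpc
    (fun h => by simpa using mem_fullCode.1 h)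
    (graft_mem_twoBlockShift hpc (shiftW_mem_twoBlockShift ht xu)
      (padTree_mem_twoBlockShift (shiftW_mem_twoBlockShift ht' xv)) fun _ => ⟨rfl, fun _ => rfl⟩)
    (fun y hy => (hxu y hy).symm) fun x hx y hy => ?_
  rw [padTree_append (mem_fullCode.1 hx)]
  exact (hxv y hy).symm

/-- the simplified golden-mean tree-shift is uniformly strongly
irreducible with complete prefix code Σ^2. -/
theorem stmt15 :
    UniformlyStronglyIrreducible (treeShiftOf goldenF) ∧
    IsCPC (fullCode 2) ∧
    ∀ u v : Pattern Bool,
      GoodPattern (treeShiftOf goldenF) u → GoodPattern (treeShiftOf goldenF) v →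
      ConnectedThrough (treeShiftOf goldenF) (fullCode 2) u v :=
  ⟨⟨2, isCPC_fullCode two_pos, goldenShift_connectedThrough_fullCode_two⟩,
    isCPC_fullCode two_pos, goldenShift_connectedThrough_fullCode_two⟩
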